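/- arXiv:2505.00501 — 2 statements merged into one kernel-verified Lean document; each statement's English description precedes it below -/
import Mathlib

section
/- Monodromy–boundary bracket lemma: let A be a commutative ℝ-algebra with an ℝ-bilinear antisymmetric bracket satisfying the Leibniz rule in each argument, let λ ∈ ℝ, X, Y ∈ M_{n²}(ℝ), and let a, b, c ∈ M_n(A) with a invertible. Set m = a⁻¹b. If {a₁, c₂} = λ a₁c₂X and {b₁, c₂} = λ b₁c₂Y in M_{n²}(A), then {m₁, c₂} = λ c₂ (m₁ Y − X m₁). In particular, taking X = Y = ρ gives {m₁, c₂} = λ c₂ [m₁, ρ], the bracket of a monodromy with a boundary field. -/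
open Matrix Kronecker TensorProduct

noncomputable section

/-- An ℝ-bilinear antisymmetric bracket on a commutative ℝ-algebra `C` satisfying the
Leibniz rule in each argument (by antisymmetry, left ℝ-linearity and the Leibniz rule in
the second argument give the corresponding properties in the first argument). -/
structure PoissonBracketOn (C : Type*) [CommRing C] [Algebra ℝ C] where
  br : C → C → C
  add_left : ∀ x y z : C, br (x + y) z = br x z + br y z
  smul_left : ∀ (r : ℝ) (x y : C), br (r • x) y = r • br x y
  antisymm : ∀ x y : C, br x y = -br y x
  leibniz : ∀ x y z : C, br x (y * z) = br x y * z + y * br x z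

/-- The matrix of brackets `({M₁,N₂})_{(i,k),(j,l)} = {M_{ij}, N_{kl}}` in `M_{n²}(C)`. -/
def brMat {n : ℕ} {C : Type*} (br : C → C → C) (M N : Matrix (Fin n) (Fin n) C) :
    Matrix (Fin n × Fin n) (Fin n × Fin n) C :=
  Matrix.of fun p q => br (M p.1 q.1) (N p.2 q.2)

/-- The Kronecker embedding `M₁ = M ⊗ 1ₙ` of `M_n(C)` into `M_{n²}(C)`. -/
def emb1 {n : ℕ} {C : Type*} [CommRing C] (M : Matrix (Fin n) (Fin n) C) :
    Matrix (Fin n × Fin n) (Fin n × Fin n) C :=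
  M ⊗ₖ (1 : Matrix (Fin n) (Fin n) C)

/-- The Kronecker embedding `N₂ = 1ₙ ⊗ N` of `M_n(C)` into `M_{n²}(C)`. -/
def emb2 {n : ℕ} {C : Type*} [CommRing C] (N : Matrix (Fin n) (Fin n) C) :
    Matrix (Fin n × Fin n) (Fin n × Fin n) C :=
  (1 : Matrix (Fin n) (Fin n) C) ⊗ₖ N

/-- A constant matrix over `ℝ` regarded as a matrix over the ℝ-algebra `C`. -/
def constM {m : Type*} {C : Type*} [CommRing C] [Algebra ℝ C] (ρ : Matrix m m ℝ) :
    Matrix m m C :=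
  ρ.map (algebraMap ℝ C)

/-- The Sklyanin bracket relation `{g₁, g₂} = μ(g₁g₂ρ − ρg₁g₂)` with r-matrix `ρ` and
scaling `μ`. -/
def SklyaninRel {n : ℕ} {C : Type*} [CommRing C] [Algebra ℝ C] (br : C → C → C) (μ : ℝ)
    (ρ : Matrix (Fin n × Fin n) (Fin n × Fin n) ℝ) (g : Matrix (Fin n) (Fin n) C) : Prop :=
  brMat br g g = μ • (emb1 g * emb2 g * constM ρ - constM ρ * (emb1 g * emb2 g))


section Aux

variable {C : Type*} [CommRing C] [Algebra ℝ C]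

lemma br_zero_left (P : PoissonBracketOn C) (y : C) : P.br 0 y = 0 := by
  have := P.smul_left 0 0 y
  simpa using this

lemma br_sum_left (P : PoissonBracketOn C) {ι : Type*} (s : Finset ι) (f : ι → C) (y : C) :
    P.br (∑ i ∈ s, f i) y = ∑ i ∈ s, P.br (f i) y := by
  classical
  induction s using Finset.induction with
  | empty => simpa using br_zero_left P y
  | insert _ _ h ih => rw [Finset.sum_insert h, Finset.sum_insert h, P.add_left, ih]

lemma br_mul_left (P : PoissonBracketOn C) (x y z : C) :
    P.br (x * y) z = P.br x z * y + x * P.br y z := by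
  rw [P.antisymm (x*y) z, P.leibniz, P.antisymm x z, P.antisymm y z]; ring

lemma emb1_mul {n : ℕ} (M N : Matrix (Fin n) (Fin n) C) :
    emb1 (M * N) = emb1 M * emb1 N := by
  simp [emb1, ← Matrix.mul_kronecker_mul]

lemma emb1_one {n : ℕ} : emb1 (1 : Matrix (Fin n) (Fin n) C) = 1 := by
  simp [emb1, Matrix.one_kronecker_one]

lemma emb1_mul_emb2 {n : ℕ} (M N : Matrix (Fin n) (Fin n) C) :
    emb1 M * emb2 N = emb2 N * emb1 M := by
  unfold emb1 emb2
  rw [← Matrix.mul_kronecker_mul, ← Matrix.mul_kronecker_mul, one_mul, mul_one, one_mul, mul_one]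

lemma brMat_mul_left {n : ℕ} (P : PoissonBracketOn C) (M N Q : Matrix (Fin n) (Fin n) C) :
    brMat P.br (M * N) Q = brMat P.br M Q * emb1 N + emb1 M * brMat P.br N Q := by
  ext ⟨i, k⟩ ⟨j, l⟩
  simp only [brMat, emb1, Matrix.mul_apply, Matrix.add_apply, Matrix.of_apply,
    Matrix.kroneckerMap_apply, Fintype.sum_prod_type]
  rw [br_sum_left P]
  simp only [br_mul_left P]
  rw [Finset.sum_add_distrib]
  congr 1 <;>
    simp [Matrix.one_apply, mul_ite, ite_mul, Finset.sum_ite_eq, Finset.sum_ite_eq', mul_assoc]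

end Aux

/-- Monodromy–boundary bracket lemma: if `a, b, c ∈ M_n(A)` with `a` invertible,
`m = a⁻¹b`, and `{a₁, c₂} = λ a₁c₂X`, `{b₁, c₂} = λ b₁c₂Y`, then
`{m₁, c₂} = λ c₂ (m₁ Y − X m₁)`. In particular, for `X = Y = ρ` this gives
`{m₁, c₂} = λ c₂ [m₁, ρ]`, the bracket of a monodromy with a boundary field. -/
theorem monodromy_boundary_bracket {n : ℕ} {A : Type} [CommRing A] [Algebra ℝ A]
    (PA : PoissonBracketOn A) (lam : ℝ)
    (X Y : Matrix (Fin n × Fin n) (Fin n × Fin n) ℝ)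
    (a b c : Matrix (Fin n) (Fin n) A) (ha : IsUnit a)
    (m : Matrix (Fin n) (Fin n) A) (hm : m = a⁻¹ * b)
    (hac : brMat PA.br a c = lam • (emb1 a * emb2 c * constM X))
    (hbc : brMat PA.br b c = lam • (emb1 b * emb2 c * constM Y)) :
    brMat PA.br m c = lam • (emb2 c * (emb1 m * constM Y - constM X * emb1 m)) := by
  have hdet : IsUnit a.det := (Matrix.isUnit_iff_isUnit_det a).mp ha
  have hab : a * m = b := by
    rw [hm]; exact Matrix.mul_nonsing_inv_cancel_left a b hdet
  have hinv : emb1 (a⁻¹) * emb1 a = 1 := by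
    rw [← emb1_mul, Matrix.nonsing_inv_mul a hdet, emb1_one]
  have key : brMat PA.br b c = brMat PA.br a c * emb1 m + emb1 a * brMat PA.br m c := by
    rw [← hab, brMat_mul_left]
  have h2 : emb1 a * brMat PA.br m c = brMat PA.br b c - brMat PA.br a c * emb1 m := by
    rw [key]; abel
  have h3 : brMat PA.br m c
      = emb1 (a⁻¹) * (brMat PA.br b c - brMat PA.br a c * emb1 m) := by
    rw [← h2, ← mul_assoc, hinv, one_mul]
  have hm1 : emb1 (a⁻¹) * emb1 b = emb1 m := by rw [← emb1_mul, ← hm]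
  have e1 : emb1 (a⁻¹) * (emb1 b * emb2 c * constM Y) = emb2 c * (emb1 m * constM Y) := by
    rw [← mul_assoc, ← mul_assoc, hm1, emb1_mul_emb2, mul_assoc]
  have e2 : emb1 (a⁻¹) * (emb1 a * emb2 c * constM X * emb1 m)
      = emb2 c * (constM X * emb1 m) := by
    rw [← mul_assoc, ← mul_assoc, ← mul_assoc, hinv, one_mul, mul_assoc]
  rw [h3, hac, hbc, smul_mul_assoc, mul_sub, mul_smul_comm, mul_smul_comm, e1, e2,
    ← smul_sub, ← mul_sub]
end
end

section
/- Monodromy–monodromy bracket lemma: let A be a commutative ℝ-algebra with an ℝ-bilinear antisymmetric bracket satisfying the Leibniz rule in each argument, let λ ∈ ℝ, ρ ∈ M_{n²}(ℝ), and let h, a, b ∈ M_n(A) with a invertible. Set h' = a⁻¹b. If {h₁, a₂} = λ a₂ [h₁, ρ] and {h₁, b₂} = λ b₂ [h₁, ρ] in M_{n²}(A), then {h₁, h'₂} = λ [h'₂, [h₁, ρ]]. -/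
open Matrix Kronecker TensorProduct

noncomputable section

section Aux

variable {n : ℕ} {A : Type} [CommRing A] [Algebra ℝ A]

lemma PoissonBracketOn.br_one (PA : PoissonBracketOn A) (x : A) : PA.br x 1 = 0 := by
  have := PA.leibniz x 1 1
  simp only [mul_one, one_mul] at this
  exact left_eq_add.mp this

lemma brMat_one (PA : PoissonBracketOn A) (h : Matrix (Fin n) (Fin n) A) :
    brMat PA.br h (1 : Matrix (Fin n) (Fin n) A) = 0 := by
  ext ⟨i,k⟩ ⟨j,l⟩
  simp only [brMat, Matrix.of_apply, Matrix.one_apply, Matrix.zero_apply]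
  by_cases hkl : k = l
  · simp [hkl, PA.br_one]
  · have h0 : PA.br (h i j) 0 = 0 := by simpa using PA.leibniz (h i j) 0 0
    simp [hkl, h0]

lemma brMat_mul_right (PA : PoissonBracketOn A) (h M N : Matrix (Fin n) (Fin n) A) :
    brMat PA.br h (M * N) = brMat PA.br h M * emb2 N + emb2 M * brMat PA.br h N := by
  ext ⟨i,k⟩ ⟨j,l⟩
  simp only [brMat, emb2, Matrix.of_apply, Matrix.mul_apply, Matrix.add_apply,
    Matrix.kroneckerMap_apply, Fintype.sum_prod_type, Matrix.one_apply,
    mul_ite, ite_mul, mul_zero, mul_one, zero_mul, one_mul,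
    Finset.sum_ite_eq, Finset.sum_ite_eq', Finset.mem_univ, if_true]
  have h0 : PA.br (h i j) 0 = 0 := by simpa using PA.leibniz (h i j) 0 0
  have add2 : ∀ x y z : A, PA.br x (y + z) = PA.br x y + PA.br x z := by
    intro x y z
    rw [PA.antisymm, PA.add_left, PA.antisymm y x, PA.antisymm z x]; ring
  have key : PA.br (h i j) (∑ m, M k m * N m l)
      = ∑ m, (PA.br (h i j) (M k m) * N m l + M k m * PA.br (h i j) (N m l)) := by
    induction (Finset.univ : Finset (Fin n)) using Finset.induction with
    | empty => simpa using h0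
    | @insert x s hx ih =>
        rw [Finset.sum_insert hx, Finset.sum_insert hx, ← ih, add2, PA.leibniz]
  rw [key, Finset.sum_add_distrib]
  congr 1
  · rw [Finset.sum_comm]; simp
  · rw [Finset.sum_comm]; simp

lemma emb2_mul (M N : Matrix (Fin n) (Fin n) A) :
    emb2 (M * N) = emb2 M * emb2 N := by
  simp [emb2, ← Matrix.mul_kronecker_mul]

lemma emb2_one : emb2 (1 : Matrix (Fin n) (Fin n) A) = 1 := by
  simp [emb2, Matrix.one_kronecker_one]

end Aux

/-- Monodromy–monodromy bracket lemma: if `h, a, b ∈ M_n(A)` with `a` invertible,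
`h' = a⁻¹b`, and `{h₁, a₂} = λ a₂ [h₁, ρ]`, `{h₁, b₂} = λ b₂ [h₁, ρ]`, then
`{h₁, h'₂} = λ [h'₂, [h₁, ρ]]`. -/
theorem monodromy_monodromy_bracket {n : ℕ} {A : Type} [CommRing A] [Algebra ℝ A]
    (PA : PoissonBracketOn A) (lam : ℝ)
    (ρ : Matrix (Fin n × Fin n) (Fin n × Fin n) ℝ)
    (h a b : Matrix (Fin n) (Fin n) A) (ha : IsUnit a)
    (h' : Matrix (Fin n) (Fin n) A) (hh' : h' = a⁻¹ * b)
    (hha : brMat PA.br h a =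
      lam • (emb2 a * (emb1 h * constM ρ - constM ρ * emb1 h)))
    (hhb : brMat PA.br h b =
      lam • (emb2 b * (emb1 h * constM ρ - constM ρ * emb1 h))) :
    brMat PA.br h h' =
      lam • (emb2 h' * (emb1 h * constM ρ - constM ρ * emb1 h) -
        (emb1 h * constM ρ - constM ρ * emb1 h) * emb2 h') := by
  have hdet : IsUnit a.det := (Matrix.isUnit_iff_isUnit_det a).mp ha
  set E := emb1 h * constM ρ - constM ρ * emb1 h with hE
  have hainv : emb2 a⁻¹ * emb2 a = 1 := by
    rw [← emb2_mul, Matrix.nonsing_inv_mul a hdet, emb2_one]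
  have hmulinv : emb2 a * emb2 a⁻¹ = 1 := by
    rw [← emb2_mul, Matrix.mul_nonsing_inv a hdet, emb2_one]
  have hzero : brMat PA.br h a⁻¹ * emb2 a + emb2 a⁻¹ * brMat PA.br h a = 0 := by
    rw [← brMat_mul_right, Matrix.nonsing_inv_mul a hdet, brMat_one]
  have hzero' : brMat PA.br h a⁻¹ + emb2 a⁻¹ * (brMat PA.br h a * emb2 a⁻¹) = 0 := by
    have := congrArg (· * emb2 a⁻¹) hzero
    simpa [add_mul, mul_assoc, hmulinv] using this
  have hinv : brMat PA.br h a⁻¹ = -(lam • (E * emb2 a⁻¹)) := by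
    rw [eq_neg_of_add_eq_zero_left hzero', hha, smul_mul_assoc, mul_smul_comm,
      ← mul_assoc, ← mul_assoc, hainv, one_mul]
  rw [hh', brMat_mul_right, hinv, hhb, emb2_mul, smul_sub]
  simp only [Matrix.neg_mul, smul_mul_assoc, mul_smul_comm, mul_assoc]
  abel
end
end
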